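/- For any bipartite density operator ρ_AB on H_A ⊗ H_B, the one-way distillable common randomness dominates the one-way distillable entanglement: C_D^←(ρ_AB) ≥ E_D^←(ρ_AB). -/

import Mathlib

open Matrix Kronecker Filter
open scoped BigOperators ComplexOrder

noncomputable section

namespace QIT

/-- The von Neumann entropy `S(ρ) = -Tr[ρ log ρ]`, computed via the eigenvalues
of a Hermitian matrix (junk value `0` for non-Hermitian input). -/
def vnEntropy {n : Type*} [Fintype n] [DecidableEq n] (ρ : Matrix n n ℂ) : ℝ :=
  if h : ρ.IsHermitian then ∑ i, Real.negMulLog (h.eigenvalues i) else 0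

/-- A density operator: positive semidefinite with unit trace. -/
def IsDensity {n : Type*} [Fintype n] (ρ : Matrix n n ℂ) : Prop :=
  ρ.PosSemidef ∧ ρ.trace = 1

/-- Partial trace over the second tensor factor. -/
def ptraceB {A B : Type*} [Fintype B] (ρ : Matrix (A × B) (A × B) ℂ) : Matrix A A ℂ :=
  Matrix.of fun a a' => ∑ b : B, ρ (a, b) (a', b)

/-- Partial trace over the first tensor factor. -/
def ptraceA {A B : Type*} [Fintype A] (ρ : Matrix (A × B) (A × B) ℂ) : Matrix B B ℂ :=
  Matrix.of fun b b' => ∑ a : A, ρ (a, b) (a, b')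

/-- Partial trace over the third factor of a tripartite system. -/
def trC {A B C : Type*} [Fintype C] (ρ : Matrix (A × B × C) (A × B × C) ℂ) :
    Matrix (A × B) (A × B) ℂ :=
  Matrix.of fun x y => ∑ c : C, ρ (x.1, x.2, c) (y.1, y.2, c)

/-- Partial trace over the second factor of a tripartite system. -/
def trB3 {A B C : Type*} [Fintype B] (ρ : Matrix (A × B × C) (A × B × C) ℂ) :
    Matrix (A × C) (A × C) ℂ :=
  Matrix.of fun x y => ∑ b : B, ρ (x.1, b, x.2) (y.1, b, y.2)

/-- Partial trace over the first factor of a tripartite system. -/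
def trA3 {A B C : Type*} [Fintype A] (ρ : Matrix (A × B × C) (A × B × C) ℂ) :
    Matrix (B × C) (B × C) ℂ :=
  Matrix.of fun x y => ∑ a : A, ρ (a, x.1, x.2) (a, y.1, y.2)

/-- Partial trace over the first two factors of a tripartite system. -/
def trAB3 {A B C : Type*} [Fintype A] [Fintype B] (ρ : Matrix (A × B × C) (A × B × C) ℂ) :
    Matrix C C ℂ :=
  Matrix.of fun c c' => ∑ a : A, ∑ b : B, ρ (a, b, c) (a, b, c')

/-- The rank-one operator `|ψ⟩⟨ψ|`. -/
def vecState {n : Type*} (ψ : n → ℂ) : Matrix n n ℂ :=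
  Matrix.of fun i j => ψ i * star (ψ j)

/-- `ψ` is a unit vector. -/
def UnitVec {n : Type*} [Fintype n] (ψ : n → ℂ) : Prop :=
  ∑ i, star (ψ i) * ψ i = 1

/-- `ρ` is a pure state (a rank-one projection). -/
def IsPure {n : Type*} [Fintype n] (ρ : Matrix n n ℂ) : Prop :=
  ∃ ψ : n → ℂ, UnitVec ψ ∧ ρ = vecState ψ

/-- A finite POVM: positive semidefinite elements summing to the identity. -/
def IsPOVM {n : Type*} [Fintype n] [DecidableEq n] {k : ℕ} (M : Fin k → Matrix n n ℂ) : Prop :=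
  (∀ x, (M x).PosSemidef) ∧ ∑ x, M x = 1

/-- `ρAB'` is a B-complement of `ρAB`: both arise as marginals of a common pure
state on `A ⊗ B ⊗ B'`. -/
def IsBComplement {A B B' : Type*} [Fintype A] [Fintype B] [Fintype B']
    (ρAB : Matrix (A × B) (A × B) ℂ) (ρAB' : Matrix (A × B') (A × B') ℂ) : Prop :=
  ∃ Ψ : A × B × B' → ℂ, UnitVec Ψ ∧ trB3 (vecState Ψ) = ρAB' ∧ trC (vecState Ψ) = ρAB

/-- Outcome probability `Tr[(1_A ⊗ M) ρ]` of a POVM element `M` measured on system `B`. -/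
def povmProb {A B : Type*} [Fintype A] [Fintype B] [DecidableEq A] [DecidableEq B]
    (ρ : Matrix (A × B) (A × B) ℂ) (M : Matrix B B ℂ) : ℝ :=
  (((1 : Matrix A A ℂ) ⊗ₖ M) * ρ).trace.re

/-- Conditional state on `A` given POVM element `M` on `B`:
`Tr_B[(1_A ⊗ M) ρ] / Tr[(1_A ⊗ M) ρ]`. -/
def condA {A B : Type*} [Fintype A] [Fintype B] [DecidableEq A] [DecidableEq B]
    (ρ : Matrix (A × B) (A × B) ℂ) (M : Matrix B B ℂ) : Matrix A A ℂ :=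
  (povmProb ρ M)⁻¹ • ptraceB (((1 : Matrix A A ℂ) ⊗ₖ M) * ρ)

/-- `I^←(ρ_AB)`: the Henderson–Vedral measure of classical correlations, the optimal
Holevo quantity over measurements on `B`. -/
def Iacc {A B : Type*} [Fintype A] [Fintype B] [DecidableEq A] [DecidableEq B]
    (ρ : Matrix (A × B) (A × B) ℂ) : ℝ :=
  sSup {v | ∃ (k : ℕ) (M : Fin k → Matrix B B ℂ), IsPOVM M ∧
    v = vnEntropy (ptraceB ρ) - ∑ x, povmProb ρ (M x) * vnEntropy (condA ρ (M x))}

/-- Outcome probability `Tr[(M ⊗ 1_B) ρ]` of a POVM element `M` measured on system `A`. -/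
def povmProbA {A B : Type*} [Fintype A] [Fintype B] [DecidableEq A] [DecidableEq B]
    (ρ : Matrix (A × B) (A × B) ℂ) (M : Matrix A A ℂ) : ℝ :=
  ((M ⊗ₖ (1 : Matrix B B ℂ)) * ρ).trace.re

/-- Conditional state on `B` given POVM element `M` on `A`. -/
def condB {A B : Type*} [Fintype A] [Fintype B] [DecidableEq A] [DecidableEq B]
    (ρ : Matrix (A × B) (A × B) ℂ) (M : Matrix A A ℂ) : Matrix B B ℂ :=
  (povmProbA ρ M)⁻¹ • ptraceA ((M ⊗ₖ (1 : Matrix B B ℂ)) * ρ)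

/-- `I^→(ρ_AB)`: optimal Holevo quantity over measurements on `A`. -/
def Iarrow {A B : Type*} [Fintype A] [Fintype B] [DecidableEq A] [DecidableEq B]
    (ρ : Matrix (A × B) (A × B) ℂ) : ℝ :=
  sSup {v | ∃ (k : ℕ) (M : Fin k → Matrix A A ℂ), IsPOVM M ∧
    v = vnEntropy (ptraceA ρ) - ∑ x, povmProbA ρ (M x) * vnEntropy (condB ρ (M x))}

/-- The entanglement of formation: the minimal average entropy of entanglement over
finite pure-state ensembles for `ρ_AB`. -/
def EoF {A B : Type*} [Fintype A] [Fintype B] [DecidableEq A]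
    (ρ : Matrix (A × B) (A × B) ℂ) : ℝ :=
  sInf {e | ∃ (k : ℕ) (p : Fin k → ℝ) (ψ : Fin k → A × B → ℂ),
    (∀ i, 0 ≤ p i) ∧ (∀ i, UnitVec (ψ i)) ∧
    (∑ i, p i • vecState (ψ i)) = ρ ∧
    e = ∑ i, p i * vnEntropy (ptraceB (vecState (ψ i)))}

/-- The `n`-fold tensor power of a bipartite state, regrouped as a bipartite state
between `Aⁿ` and `Bⁿ`. -/
def tpow {A B : Type*} (ρ : Matrix (A × B) (A × B) ℂ) (n : ℕ) :
    Matrix ((Fin n → A) × (Fin n → B)) ((Fin n → A) × (Fin n → B)) ℂ :=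
  Matrix.of fun x y => ∏ i, ρ (x.1 i, x.2 i) (y.1 i, y.2 i)

/-- The `n`-fold tensor power of a tripartite state, regrouped as a tripartite state
on `Aⁿ ⊗ Bⁿ ⊗ Eⁿ`. -/
def tpow3 {A B E : Type*} (ρ : Matrix (A × B × E) (A × B × E) ℂ) (n : ℕ) :
    Matrix ((Fin n → A) × (Fin n → B) × (Fin n → E))
           ((Fin n → A) × (Fin n → B) × (Fin n → E)) ℂ :=
  Matrix.of fun x y => ∏ i, ρ (x.1 i, x.2.1 i, x.2.2 i) (y.1 i, y.2.1 i, y.2.2 i)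

/-- Tensor product of two bipartite states, regrouped as a bipartite state between
`A₁A₂` and `B₁B₂`. -/
def tprod2 {A₁ B₁ A₂ B₂ : Type*}
    (ρ₁ : Matrix (A₁ × B₁) (A₁ × B₁) ℂ) (ρ₂ : Matrix (A₂ × B₂) (A₂ × B₂) ℂ) :
    Matrix ((A₁ × A₂) × B₁ × B₂) ((A₁ × A₂) × B₁ × B₂) ℂ :=
  Matrix.of fun x y =>
    ρ₁ (x.1.1, x.2.1) (y.1.1, y.2.1) * ρ₂ (x.1.2, x.2.2) (y.1.2, y.2.2)

/-- Outcome probability for a POVM element `M` on `B` for a tripartite state on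
`A ⊗ B ⊗ E`. -/
def secProb {A B E : Type*} [Fintype A] [Fintype B] [Fintype E]
    [DecidableEq A] [DecidableEq B] [DecidableEq E]
    (ρ : Matrix (A × B × E) (A × B × E) ℂ) (M : Matrix B B ℂ) : ℝ :=
  ((((1 : Matrix A A ℂ) ⊗ₖ (M ⊗ₖ (1 : Matrix E E ℂ))) * ρ).trace).re

/-- Conditional state on `A` given POVM element `M` on `B` (tripartite state). -/
def secCondA {A B E : Type*} [Fintype A] [Fintype B] [Fintype E]
    [DecidableEq A] [DecidableEq B] [DecidableEq E]
    (ρ : Matrix (A × B × E) (A × B × E) ℂ) (M : Matrix B B ℂ) : Matrix A A ℂ :=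
  (secProb ρ M)⁻¹ • ptraceB ((((1 : Matrix A A ℂ) ⊗ₖ (M ⊗ₖ (1 : Matrix E E ℂ)))) * ρ)

/-- Conditional state on `E` given POVM element `M` on `B` (tripartite state). -/
def secCondE {A B E : Type*} [Fintype A] [Fintype B] [Fintype E]
    [DecidableEq A] [DecidableEq B] [DecidableEq E]
    (ρ : Matrix (A × B × E) (A × B × E) ℂ) (M : Matrix B B ℂ) : Matrix E E ℂ :=
  (secProb ρ M)⁻¹ • trAB3 ((((1 : Matrix A A ℂ) ⊗ₖ (M ⊗ₖ (1 : Matrix E E ℂ)))) * ρ)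

/-- The one-shot one-way distillable secret key (Devetak–Winter formula):
`max over POVMs on B of I(X;A) - I(X;E)` for a state on `A ⊗ B ⊗ E`. -/
def Csec1 {A B E : Type*} [Fintype A] [Fintype B] [Fintype E]
    [DecidableEq A] [DecidableEq B] [DecidableEq E]
    (ρ : Matrix (A × B × E) (A × B × E) ℂ) : ℝ :=
  sSup {v | ∃ (k : ℕ) (M : Fin k → Matrix B B ℂ), IsPOVM M ∧
    v = (vnEntropy (ptraceB ρ) - ∑ x, secProb ρ (M x) * vnEntropy (secCondA ρ (M x)))
      - (vnEntropy (trAB3 ρ) - ∑ x, secProb ρ (M x) * vnEntropy (secCondE ρ (M x)))}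

/-- Application of one branch (given by Kraus operators `K j`) of a quantum instrument
acting on the `B` system of a bipartite state. -/
def instrApply {A B : Type*} [Fintype A] [Fintype B] [DecidableEq A] [DecidableEq B]
    {m : ℕ} (K : Fin m → Matrix B B ℂ) (ρ : Matrix (A × B) (A × B) ℂ) :
    Matrix (A × B) (A × B) ℂ :=
  ∑ j, ((1 : Matrix A A ℂ) ⊗ₖ K j) * ρ * ((1 : Matrix A A ℂ) ⊗ₖ K j)ᴴ

/-- The one-shot hashing bound `E_D^{←(1)}`: supremum over finite quantum instruments on
`B` (branches given in Kraus form, jointly trace preserving) of the expected coherent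
information `Σ_i p_i [S(ρ_A^(i)) - S(ρ_AB^(i))]`. -/
def ED1 {A B : Type*} [Fintype A] [Fintype B] [DecidableEq A] [DecidableEq B]
    (ρ : Matrix (A × B) (A × B) ℂ) : ℝ :=
  sSup {v | ∃ (k m : ℕ) (K : Fin k → Fin m → Matrix B B ℂ),
    (∑ i, ∑ j, (K i j)ᴴ * K i j) = 1 ∧
    v = ∑ i, (instrApply (K i) ρ).trace.re *
        (vnEntropy ((instrApply (K i) ρ).trace.re⁻¹ • ptraceB (instrApply (K i) ρ)) -
         vnEntropy ((instrApply (K i) ρ).trace.re⁻¹ • instrApply (K i) ρ))}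

/-- The conditional quantum mutual information `I(A;B|E)` of a tripartite state on
`A ⊗ B ⊗ E`. -/
def cmi {A B E : Type*} [Fintype A] [Fintype B] [Fintype E]
    [DecidableEq A] [DecidableEq B] [DecidableEq E]
    (ρ : Matrix (A × B × E) (A × B × E) ℂ) : ℝ :=
  vnEntropy (trB3 ρ) + vnEntropy (trA3 ρ) - vnEntropy ρ - vnEntropy (trAB3 ρ)

/-- The squashed entanglement: infimum of `(1/2) I(A;B|E)` over all finite-dimensional
extensions of `ρ_AB`. -/
def Esq {A B : Type*} [Fintype A] [Fintype B] [DecidableEq A] [DecidableEq B]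
    (ρ : Matrix (A × B) (A × B) ℂ) : ℝ :=
  sInf {v | ∃ (d : ℕ) (σ : Matrix (A × B × Fin d) (A × B × Fin d) ℂ),
    IsDensity σ ∧ trC σ = ρ ∧ v = (1 / 2) * cmi σ}

/-- Partial trace over the third factor of a four-partite system. -/
def tr4C {A B C E : Type*} [Fintype C]
    (ρ : Matrix (A × B × C × E) (A × B × C × E) ℂ) : Matrix (A × B × E) (A × B × E) ℂ :=
  Matrix.of fun x y => ∑ c : C, ρ (x.1, x.2.1, c, x.2.2) (y.1, y.2.1, c, y.2.2)

/-- Partial trace over the first and third factors of a four-partite system. -/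
def tr4AC {A B C E : Type*} [Fintype A] [Fintype C]
    (ρ : Matrix (A × B × C × E) (A × B × C × E) ℂ) : Matrix (B × E) (B × E) ℂ :=
  Matrix.of fun x y => ∑ a : A, ∑ c : C, ρ (a, x.1, c, x.2) (a, y.1, c, y.2)

/-- Partial trace over the first three factors of a four-partite system. -/
def tr4ABC {A B C E : Type*} [Fintype A] [Fintype B] [Fintype C]
    (ρ : Matrix (A × B × C × E) (A × B × C × E) ℂ) : Matrix E E ℂ :=
  Matrix.of fun e e' => ∑ a : A, ∑ b : B, ∑ c : C, ρ (a, b, c, e) (a, b, c, e')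

/-- Regroup a four-partite state on `A ⊗ B ⊗ C ⊗ E` as a state on `A ⊗ C ⊗ (B ⊗ E)`. -/
def reACBE {A B C E : Type*} (ρ : Matrix (A × B × C × E) (A × B × C × E) ℂ) :
    Matrix (A × C × B × E) (A × C × B × E) ℂ :=
  Matrix.of fun x y =>
    ρ (x.1, x.2.2.1, x.2.1, x.2.2.2) (y.1, y.2.2.1, y.2.1, y.2.2.2)

/-- Regroup a four-partite state on `A ⊗ B ⊗ C ⊗ E` as a state on `A ⊗ (BC) ⊗ E`. -/
def reABCtE {A B C E : Type*} (ρ : Matrix (A × B × C × E) (A × B × C × E) ℂ) :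
    Matrix (A × (B × C) × E) (A × (B × C) × E) ℂ :=
  Matrix.of fun x y =>
    ρ (x.1, x.2.1.1, x.2.1.2, x.2.2) (y.1, y.2.1.1, y.2.1.2, y.2.2)

/-! ### Auxiliary machinery -/

section CDgeEDAux

open Polynomial in
private lemma aux_masterSum {n m : Type*} [Fintype n] [Fintype m]
    (c : n → ℝ) (d : m → ℝ) (s t : ℕ)
    (h : ∀ x : ℂ, x ≠ 0 → (∏ i, (x - (c i : ℂ))) * x ^ s = (∏ j, (x - (d j : ℂ))) * x ^ t) :
    ∑ i, Real.negMulLog (c i) = ∑ j, Real.negMulLog (d j) := by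
  classical
  have hPQ : ((∏ i, (X - C (c i : ℂ))) * X ^ s) = ((∏ j, (X - C (d j : ℂ))) * X ^ t) := by
    apply Polynomial.eq_of_infinite_eval_eq
    refine ((Set.finite_singleton (0 : ℂ)).infinite_compl).mono ?_
    intro x hx
    have hx' : x ≠ 0 := by simpa using hx
    simp only [Set.mem_setOf_eq, eval_mul, eval_pow, eval_prod, eval_sub, eval_X, eval_C]
    exact h x hx'
  have hmonic1 : (∏ i, (X - C (c i : ℂ))).Monic :=
    monic_prod_of_monic _ _ fun i _ => monic_X_sub_C _
  have hmonic2 : (∏ j, (X - C (d j : ℂ))).Monic :=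
    monic_prod_of_monic _ _ fun j _ => monic_X_sub_C _
  have hroots1 : (∏ i, (X - C (c i : ℂ))).roots = Finset.univ.val.map fun i => (c i : ℂ) := by
    rw [Finset.prod_eq_multiset_prod]
    rw [show (Finset.univ.val.map fun i => X - C ((c i : ℂ))) =
      ((Finset.univ.val.map fun i => ((c i : ℂ))).map fun a => X - C a) by
        rw [Multiset.map_map]; rfl]
    exact Polynomial.roots_multiset_prod_X_sub_C _
  have hroots2 : (∏ j, (X - C (d j : ℂ))).roots = Finset.univ.val.map fun j => (d j : ℂ) := by
    rw [Finset.prod_eq_multiset_prod]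
    rw [show (Finset.univ.val.map fun j => X - C ((d j : ℂ))) =
      ((Finset.univ.val.map fun j => ((d j : ℂ))).map fun a => X - C a) by
        rw [Multiset.map_map]; rfl]
    exact Polynomial.roots_multiset_prod_X_sub_C _
  have hr := congrArg Polynomial.roots hPQ
  rw [Polynomial.roots_mul (mul_ne_zero hmonic1.ne_zero (pow_ne_zero _ X_ne_zero)),
      Polynomial.roots_mul (mul_ne_zero hmonic2.ne_zero (pow_ne_zero _ X_ne_zero)),
      Polynomial.roots_pow, Polynomial.roots_pow, Polynomial.roots_X, hroots1, hroots2] at hr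
  have hs := congrArg (fun M : Multiset ℂ => (M.map fun z => Real.negMulLog z.re).sum) hr
  simp only [Multiset.map_add, Multiset.sum_add, Multiset.map_map, Function.comp,
    Multiset.nsmul_singleton, Multiset.map_replicate, Multiset.sum_replicate, Complex.ofReal_re,
    Complex.zero_re, Real.negMulLog_zero, smul_zero, add_zero] at hs
  rw [Finset.sum_eq_multiset_sum, Finset.sum_eq_multiset_sum]
  exact hs

private lemma aux_det_conj {n : Type*} [Fintype n] [DecidableEq n]
    (U Z : Matrix n n ℂ) (hU : U * star U = 1) (x : ℂ) :
    (x • (1 : Matrix n n ℂ) - U * Z * star U).det = (x • (1 : Matrix n n ℂ) - Z).det := by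
  have key : x • (1 : Matrix n n ℂ) - U * Z * star U
      = U * (x • (1 : Matrix n n ℂ) - Z) * star U := by
    rw [Matrix.mul_sub, Matrix.sub_mul]
    congr 1
    rw [Matrix.mul_smul, Matrix.mul_one, Matrix.smul_mul, hU]
  rw [key, Matrix.det_mul, Matrix.det_mul]
  have hdet : U.det * (star U).det = 1 := by
    rw [← Matrix.det_mul, hU, Matrix.det_one]
  calc U.det * (x • (1 : Matrix n n ℂ) - Z).det * (star U).det
      = U.det * (star U).det * (x • (1 : Matrix n n ℂ) - Z).det := by ring
    _ = (x • (1 : Matrix n n ℂ) - Z).det := by rw [hdet, one_mul]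

private lemma aux_det_eig {n : Type*} [Fintype n] [DecidableEq n]
    {M : Matrix n n ℂ} (hM : M.IsHermitian) (x : ℂ) :
    (x • (1 : Matrix n n ℂ) - M).det = ∏ i, (x - (hM.eigenvalues i : ℂ)) := by
  have hU : (hM.eigenvectorUnitary : Matrix n n ℂ)
      * star (hM.eigenvectorUnitary : Matrix n n ℂ) = 1 := by
    simpa using (Matrix.mem_unitaryGroup_iff).mp hM.eigenvectorUnitary.2
  calc (x • (1 : Matrix n n ℂ) - M).det
      = (x • (1 : Matrix n n ℂ) - (hM.eigenvectorUnitary : Matrix n n ℂ)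
          * Matrix.diagonal (RCLike.ofReal ∘ hM.eigenvalues)
          * star (hM.eigenvectorUnitary : Matrix n n ℂ)).det := by
          conv_lhs => rw [hM.spectral_theorem, Unitary.conjStarAlgAut_apply]
    _ = (x • (1 : Matrix n n ℂ) - Matrix.diagonal (RCLike.ofReal ∘ hM.eigenvalues)).det :=
        aux_det_conj _ _ hU x
    _ = ∏ i, (x - (hM.eigenvalues i : ℂ)) := by
        rw [Matrix.smul_one_eq_diagonal, Matrix.diagonal_sub, Matrix.det_diagonal]
        rfl

private lemma aux_vnEntropy_eq {n : Type*} [Fintype n] [DecidableEq n]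
    {M : Matrix n n ℂ} (hM : M.IsHermitian) :
    vnEntropy M = ∑ i, Real.negMulLog (hM.eigenvalues i) := dif_pos hM

private lemma aux_vnEntropy_eq_of_det {n m : Type*} [Fintype n] [DecidableEq n]
    [Fintype m] [DecidableEq m]
    {M : Matrix n n ℂ} {N : Matrix m m ℂ} (hM : M.IsHermitian) (hN : N.IsHermitian)
    (h : ∀ x : ℂ, x ≠ 0 → (x • (1 : Matrix n n ℂ) - M).det * x ^ (Fintype.card m)
        = (x • (1 : Matrix m m ℂ) - N).det * x ^ (Fintype.card n)) :
    vnEntropy M = vnEntropy N := by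
  rw [aux_vnEntropy_eq hM, aux_vnEntropy_eq hN]
  exact aux_masterSum _ _ _ _ (fun x hx => by
    rw [← aux_det_eig hM, ← aux_det_eig hN]; exact h x hx)

private lemma aux_vnEntropy_transpose {n : Type*} [Fintype n] [DecidableEq n]
    {M : Matrix n n ℂ} (hM : M.IsHermitian) :
    vnEntropy Mᵀ = vnEntropy M := by
  apply aux_vnEntropy_eq_of_det hM.transpose hM
  intro x _
  congr 1
  rw [show x • (1 : Matrix n n ℂ) - Mᵀ = (x • (1 : Matrix n n ℂ) - M)ᵀ by
    rw [Matrix.transpose_sub, Matrix.transpose_smul, Matrix.transpose_one]]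
  rw [Matrix.det_transpose]

private lemma aux_vnEntropy_mul_conjT {a b : Type*} [Fintype a] [DecidableEq a]
    [Fintype b] [DecidableEq b] (M : Matrix a b ℂ) :
    vnEntropy (M * Mᴴ) = vnEntropy (Mᴴ * M) := by
  apply aux_vnEntropy_eq_of_det (Matrix.isHermitian_mul_conjTranspose_self M)
    (Matrix.isHermitian_conjTranspose_mul_self M)
  intro x hx
  have e1 : x • (1 : Matrix a a ℂ) - M * Mᴴ
      = x • ((1 : Matrix a a ℂ) + ((-x⁻¹) • M) * Mᴴ) := by
    rw [smul_add, Matrix.smul_mul, smul_smul, mul_neg, mul_inv_cancel₀ hx, neg_one_smul,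
      sub_eq_add_neg]
  have e2 : x • (1 : Matrix b b ℂ) - Mᴴ * M
      = x • ((1 : Matrix b b ℂ) + Mᴴ * ((-x⁻¹) • M)) := by
    rw [smul_add, Matrix.mul_smul, smul_smul, mul_neg, mul_inv_cancel₀ hx, neg_one_smul,
      sub_eq_add_neg]
  rw [e1, e2, Matrix.det_smul, Matrix.det_smul,
    Matrix.det_one_add_mul_comm ((-x⁻¹) • M) Mᴴ]
  ring

private lemma aux_vnEntropy_zero {n : Type*} [Fintype n] [DecidableEq n] :
    vnEntropy (0 : Matrix n n ℂ) = 0 := by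
  have hh : ((0 : Matrix n n ℂ)).IsHermitian := Matrix.isHermitian_zero
  rw [aux_vnEntropy_eq hh]
  have h := aux_masterSum hh.eigenvalues (fun _ : n => (0 : ℝ)) 0 0 ?_
  · rw [h]
    simp
  · intro x hx
    rw [← aux_det_eig hh]
    simp [Matrix.det_smul]

open scoped MatrixOrder Matrix.Norms.L2Operator in
private lemma aux_psd_eq_conjT_mul {n : Type*} [Fintype n] [DecidableEq n] {M : Matrix n n ℂ}
    (hM : M.PosSemidef) : ∃ B : Matrix n n ℂ, M = Bᴴ * B := by
  obtain ⟨B, hB⟩ := CStarAlgebra.nonneg_iff_eq_star_mul_self.mp hM.nonneg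
  exact ⟨B, hB⟩

open scoped MatrixOrder Matrix.Norms.L2Operator in
private lemma aux_psd_sqrt {n : Type*} [Fintype n] [DecidableEq n] {M : Matrix n n ℂ}
    (hM : M.PosSemidef) : ∃ S : Matrix n n ℂ, S * S = M ∧ Sᴴ = S :=
  ⟨CFC.sqrt M, CFC.sqrt_mul_sqrt_self M hM.nonneg, (CFC.sqrt_nonneg M).posSemidef.1⟩

end CDgeEDAux
section CDgeEDAux2

variable {n : Type*} [Fintype n] [DecidableEq n]

private lemma aux_trace_eq_sum_eig {M : Matrix n n ℂ} (hM : M.IsHermitian) :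
    M.trace = ∑ i, (hM.eigenvalues i : ℂ) := by
  have hU : star (hM.eigenvectorUnitary : Matrix n n ℂ)
      * (hM.eigenvectorUnitary : Matrix n n ℂ) = 1 := by
    simpa using (Matrix.mem_unitaryGroup_iff').mp hM.eigenvectorUnitary.2
  conv_lhs => rw [hM.spectral_theorem, Unitary.conjStarAlgAut_apply]
  rw [Matrix.trace_mul_cycle, hU, Matrix.one_mul, Matrix.trace_diagonal]
  rfl

private lemma aux_trace_re_eq {M : Matrix n n ℂ} (hM : M.IsHermitian) :
    ((M.trace.re : ℝ) : ℂ) = M.trace := by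
  apply Complex.conj_eq_iff_re.mp
  have : star M.trace = M.trace := by
    conv_lhs => rw [← hM, Matrix.trace_conjTranspose, star_star]
  exact this

private lemma aux_sum_eig_real {M : Matrix n n ℂ} (hM : M.IsHermitian) (htr : M.trace = 1) :
    ∑ i, hM.eigenvalues i = 1 := by
  have := aux_trace_eq_sum_eig hM
  rw [htr] at this
  have h2 : ((1 : ℝ) : ℂ) = ((∑ i, hM.eigenvalues i : ℝ) : ℂ) := by
    push_cast
    simpa using this
  exact_mod_cast h2.symm

private lemma aux_diag_nonneg {M : Matrix n n ℂ} (hM : M.PosSemidef) (i : n) :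
    0 ≤ M i i := by
  exact hM.diag_nonneg

private lemma aux_trace_re_nonneg {M : Matrix n n ℂ} (hM : M.PosSemidef) :
    0 ≤ M.trace.re := by
  rw [Matrix.trace]
  rw [Complex.re_sum]
  apply Finset.sum_nonneg
  intro i _
  exact (Complex.le_def.mp (aux_diag_nonneg hM i)).1

private lemma aux_psd_trace_zero {M : Matrix n n ℂ} (hM : M.PosSemidef)
    (h : M.trace.re = 0) : M = 0 := by
  obtain ⟨B, rfl⟩ := aux_psd_eq_conjT_mul hM
  have hB : ∀ j i, B j i = 0 := by
    have hsum : ∑ i, ∑ j, Complex.normSq (B j i) = 0 := by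
      have : (Bᴴ * B).trace.re = ∑ i, ∑ j, Complex.normSq (B j i) := by
        rw [Matrix.trace, Complex.re_sum]
        apply Finset.sum_congr rfl
        intro i _
        show ((Bᴴ * B) i i).re = ∑ j, Complex.normSq (B j i)
        rw [Matrix.mul_apply, Complex.re_sum]
        apply Finset.sum_congr rfl
        intro j _
        simp [Matrix.conjTranspose_apply, Complex.normSq_eq_conj_mul_self, Complex.normSq_apply]
      rw [← this, h]
    intro j i
    have h1 : ∀ i ∈ Finset.univ (α := n), (0:ℝ) ≤ ∑ j, Complex.normSq (B j i) :=
      fun i _ => Finset.sum_nonneg fun j _ => Complex.normSq_nonneg _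
    have h2 := (Finset.sum_eq_zero_iff_of_nonneg h1).mp hsum i (Finset.mem_univ i)
    have h3 := (Finset.sum_eq_zero_iff_of_nonneg
      (fun j _ => Complex.normSq_nonneg (B j i))).mp h2 j (Finset.mem_univ j)
    exact Complex.normSq_eq_zero.mp h3
  have : B = 0 := by ext j i; exact hB j i
  rw [this]
  simp

private lemma aux_psd_smul {M : Matrix n n ℂ} (hM : M.PosSemidef) {r : ℝ} (hr : 0 ≤ r) :
    (r • M).PosSemidef := by
  exact hM.smul hr

private lemma aux_psd_sum {ι : Type*} (s : Finset ι) (f : ι → Matrix n n ℂ)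
    (h : ∀ i ∈ s, (f i).PosSemidef) : (∑ i ∈ s, f i).PosSemidef := by
  classical
  induction s using Finset.induction_on with
  | empty => simpa using Matrix.PosSemidef.zero
  | insert a s hni ih =>
    rw [Finset.sum_insert hni]
    exact (h a (Finset.mem_insert_self a s)).add
      (ih fun i hi => h i (Finset.mem_insert_of_mem hi))

private lemma aux_eig_le_one {M : Matrix n n ℂ} (hM : M.PosSemidef) (htr : M.trace = 1)
    (i : n) : hM.1.eigenvalues i ≤ 1 := by
  have hsum := aux_sum_eig_real hM.1 htr
  calc hM.1.eigenvalues i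
      ≤ ∑ j, hM.1.eigenvalues j :=
        Finset.single_le_sum (fun j _ => hM.eigenvalues_nonneg j) (Finset.mem_univ i)
    _ = 1 := hsum

private lemma aux_vnEntropy_nonneg {M : Matrix n n ℂ} (hM : M.PosSemidef)
    (htr : M.trace = 1) : 0 ≤ vnEntropy M := by
  rw [aux_vnEntropy_eq hM.1]
  apply Finset.sum_nonneg
  intro i _
  exact Real.negMulLog_nonneg (hM.eigenvalues_nonneg i) (aux_eig_le_one hM htr i)

private lemma aux_vnEntropy_normalize_nonneg {M : Matrix n n ℂ} (hM : M.PosSemidef) :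
    0 ≤ vnEntropy ((M.trace.re)⁻¹ • M) := by
  rcases eq_or_ne M.trace.re 0 with h | h
  · rw [aux_psd_trace_zero hM h]
    rw [smul_zero, aux_vnEntropy_zero]
  · apply aux_vnEntropy_nonneg
      (aux_psd_smul hM (inv_nonneg.mpr (aux_trace_re_nonneg hM)))
    have htr : M.trace = ((M.trace.re : ℝ) : ℂ) := (aux_trace_re_eq hM.1).symm
    rw [Matrix.trace_smul, Complex.real_smul, htr]
    simp only [Complex.ofReal_re]
    norm_cast
    exact inv_mul_cancel₀ h

end CDgeEDAux2
section CDgeEDAux3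

variable {A B : Type*} [Fintype A] [DecidableEq A] [Fintype B] [DecidableEq B]

private lemma aux_kron_conjT (M : Matrix B B ℂ) :
    ((1 : Matrix A A ℂ) ⊗ₖ M)ᴴ = (1 : Matrix A A ℂ) ⊗ₖ Mᴴ := by
  ext ⟨a, b⟩ ⟨a', b'⟩
  simp [Matrix.conjTranspose_apply, Matrix.one_apply, eq_comm]
  split <;> simp

private lemma aux_kron_sum {ι : Type*} (s : Finset ι) (f : ι → Matrix B B ℂ) :
    (1 : Matrix A A ℂ) ⊗ₖ (∑ i ∈ s, f i) = ∑ i ∈ s, (1 : Matrix A A ℂ) ⊗ₖ f i := by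
  ext ⟨a, b⟩ ⟨a', b'⟩
  simp [Matrix.sum_apply, Finset.mul_sum]

private lemma aux_ptraceB_sum {ι : Type*} (s : Finset ι) (f : ι → Matrix (A × B) (A × B) ℂ) :
    ptraceB (∑ i ∈ s, f i) = ∑ i ∈ s, ptraceB (f i) := by
  ext a a'
  simp [ptraceB, Matrix.sum_apply]
  rw [Finset.sum_comm]

private lemma aux_ptraceB_smul {R : Type*} [DistribSMul R ℂ] (r : R)
    (ρ : Matrix (A × B) (A × B) ℂ) : ptraceB (r • ρ) = r • ptraceB ρ := by
  ext a a'
  simp [ptraceB, Finset.smul_sum]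

private lemma aux_ptraceA_smul {R : Type*} [DistribSMul R ℂ] (r : R)
    (ρ : Matrix (A × B) (A × B) ℂ) : ptraceA (r • ρ) = r • ptraceA ρ := by
  ext b b'
  simp [ptraceA, Finset.smul_sum]

private lemma aux_ptraceB_zero : ptraceB (0 : Matrix (A × B) (A × B) ℂ) = 0 := by
  ext a a'; simp [ptraceB]

private lemma aux_trace_ptraceB (ρ : Matrix (A × B) (A × B) ℂ) :
    (ptraceB ρ).trace = ρ.trace := by
  simp [ptraceB, Matrix.trace, Matrix.diag, Fintype.sum_prod_type]

private lemma aux_trace_ptraceA (ρ : Matrix (A × B) (A × B) ℂ) :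
    (ptraceA ρ).trace = ρ.trace := by
  rw [Matrix.trace, Matrix.trace, Fintype.sum_prod_type]
  rw [Finset.sum_comm]
  rfl

private lemma aux_ptraceB_psd {ρ : Matrix (A × B) (A × B) ℂ} (hρ : ρ.PosSemidef) :
    (ptraceB ρ).PosSemidef := by
  obtain ⟨C, rfl⟩ := aux_psd_eq_conjT_mul hρ
  have key : ptraceB (Cᴴ * C)
      = (Matrix.of fun (zb : (A × B) × B) (a : A) => C zb.1 (a, zb.2))ᴴ
        * (Matrix.of fun (zb : (A × B) × B) (a : A) => C zb.1 (a, zb.2)) := by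
    ext a a'
    simp only [ptraceB, Matrix.of_apply, Matrix.mul_apply, Matrix.conjTranspose_apply,
      Fintype.sum_prod_type]
    rw [Finset.sum_comm]
    apply Finset.sum_congr rfl
    intro z _
    rw [Finset.sum_comm]
  rw [key]
  exact Matrix.posSemidef_conjTranspose_mul_self _

private lemma aux_ptraceA_psd {ρ : Matrix (A × B) (A × B) ℂ} (hρ : ρ.PosSemidef) :
    (ptraceA ρ).PosSemidef := by
  obtain ⟨C, rfl⟩ := aux_psd_eq_conjT_mul hρ
  have key : ptraceA (Cᴴ * C)
      = (Matrix.of fun (za : (A × B) × A) (b : B) => C za.1 (za.2, b))ᴴ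
        * (Matrix.of fun (za : (A × B) × A) (b : B) => C za.1 (za.2, b)) := by
    ext b b'
    simp only [ptraceA, Matrix.of_apply, Matrix.mul_apply, Matrix.conjTranspose_apply,
      Fintype.sum_prod_type]
    rw [Finset.sum_comm]
    apply Finset.sum_congr rfl
    intro z _
    rw [Finset.sum_comm]
  rw [key]
  exact Matrix.posSemidef_conjTranspose_mul_self _

private lemma aux_vecState_posSemidef {n : Type*} [Fintype n] (ψ : n → ℂ) :
    (vecState ψ).PosSemidef := by
  have key : vecState ψ
      = (Matrix.of fun (_ : Unit) i => (starRingEnd ℂ) (ψ i))ᴴ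
        * (Matrix.of fun (_ : Unit) i => (starRingEnd ℂ) (ψ i)) := by
    ext i j
    simp [vecState, Matrix.mul_apply, Matrix.conjTranspose_apply]
  rw [key]
  exact Matrix.posSemidef_conjTranspose_mul_self _

private lemma aux_kron_mul_apply (M : Matrix B B ℂ) (ρ : Matrix (A × B) (A × B) ℂ)
    (a : A) (b : B) (y : A × B) :
    (((1 : Matrix A A ℂ) ⊗ₖ M) * ρ) (a, b) y = ∑ e, M b e * ρ (a, e) y := by
  rw [Matrix.mul_apply, Fintype.sum_prod_type]
  rw [Finset.sum_eq_single a]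
  · apply Finset.sum_congr rfl
    intro e _
    simp [Matrix.one_apply]
  · intro x _ hx
    apply Finset.sum_eq_zero
    intro e _
    simp [Matrix.one_apply_ne (Ne.symm hx)]
  · intro h
    exact absurd (Finset.mem_univ a) h

private lemma aux_mul_kron_apply (M : Matrix B B ℂ) (ρ : Matrix (A × B) (A × B) ℂ)
    (x : A × B) (a : A) (b : B) :
    (ρ * ((1 : Matrix A A ℂ) ⊗ₖ M)) x (a, b) = ∑ e, ρ x (a, e) * M e b := by
  rw [Matrix.mul_apply, Fintype.sum_prod_type]
  rw [Finset.sum_eq_single a]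
  · apply Finset.sum_congr rfl
    intro e _
    simp [Matrix.one_apply]
  · intro c _ hc
    apply Finset.sum_eq_zero
    intro e _
    simp [Matrix.one_apply_ne hc]
  · intro h
    exact absurd (Finset.mem_univ a) h

private lemma aux_ptraceB_cyc (L R : Matrix B B ℂ) (ρ : Matrix (A × B) (A × B) ℂ) :
    ptraceB (((1 : Matrix A A ℂ) ⊗ₖ L) * ρ * ((1 : Matrix A A ℂ) ⊗ₖ R))
      = ptraceB (((1 : Matrix A A ℂ) ⊗ₖ (R * L)) * ρ) := by
  ext a a'
  show ∑ b, (((1 : Matrix A A ℂ) ⊗ₖ L) * ρ * ((1 : Matrix A A ℂ) ⊗ₖ R)) (a, b) (a', b)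
      = ∑ b, (((1 : Matrix A A ℂ) ⊗ₖ (R * L)) * ρ) (a, b) (a', b)
  have lhs_eq : ∀ b, (((1 : Matrix A A ℂ) ⊗ₖ L) * ρ * ((1 : Matrix A A ℂ) ⊗ₖ R)) (a, b) (a', b)
      = ∑ e, ∑ f, L b e * (ρ (a, e) (a', f) * R f b) := by
    intro b
    rw [Matrix.mul_assoc]
    rw [aux_kron_mul_apply]
    apply Finset.sum_congr rfl
    intro e _
    rw [aux_mul_kron_apply, Finset.mul_sum]
  have rhs_eq : ∀ b, (((1 : Matrix A A ℂ) ⊗ₖ (R * L)) * ρ) (a, b) (a', b)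
      = ∑ e, ∑ f, R b f * L f e * ρ (a, e) (a', b) := by
    intro b
    rw [aux_kron_mul_apply]
    apply Finset.sum_congr rfl
    intro e _
    rw [Matrix.mul_apply, Finset.sum_mul]
  simp only [lhs_eq, rhs_eq]
  rw [show (∑ b, ∑ e, ∑ f, L b e * (ρ (a, e) (a', f) * R f b))
      = ∑ t : B × B × B, L t.1 t.2.1 * (ρ (a, t.2.1) (a', t.2.2) * R t.2.2 t.1) by
    simp [Fintype.sum_prod_type]]
  rw [show (∑ b, ∑ e, ∑ f, R b f * L f e * ρ (a, e) (a', b))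
      = ∑ t : B × B × B, R t.1 t.2.2 * L t.2.2 t.2.1 * ρ (a, t.2.1) (a', t.1) by
    simp [Fintype.sum_prod_type]]
  apply Fintype.sum_bijective (fun t : B × B × B => (t.2.2, t.2.1, t.1))
  · exact (Equiv.mk (fun t : B × B × B => (t.2.2, t.2.1, t.1))
      (fun t => (t.2.2, t.2.1, t.1)) (fun t => rfl) (fun t => rfl)).bijective
  · intro t
    ring

end CDgeEDAux3
section CDgeEDAux4

variable {n : Type*} [Fintype n] [DecidableEq n]

private lemma aux_unitary_conj_diag_re {W : Matrix n n ℂ} (D : n → ℝ) (i : n) :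
    ((star W * Matrix.diagonal (fun k => (D k : ℂ)) * W) i i).re
      = ∑ k, Complex.normSq (W k i) * D k := by
  have h1 : (star W * Matrix.diagonal (fun k => (D k : ℂ)) * W) i i
      = ∑ j, star (W j i) * (D j : ℂ) * W j i := by
    rw [Matrix.mul_apply]
    have h2 : ∀ j, (star W * Matrix.diagonal (fun k => (D k : ℂ))) i j
        = star (W j i) * (D j : ℂ) := by
      intro j
      rw [Matrix.mul_apply, Finset.sum_eq_single j]
      · rw [Matrix.diagonal_apply_eq, Matrix.star_apply]
      · intro b _ hb
        rw [Matrix.diagonal_apply_ne _ hb, mul_zero]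
      · intro h
        exact absurd (Finset.mem_univ j) h
    apply Finset.sum_congr rfl
    intro j _
    rw [h2 j]
  rw [h1, Complex.re_sum]
  apply Finset.sum_congr rfl
  intro k _
  have hk : star (W k i) * (D k : ℂ) * W k i = ((Complex.normSq (W k i) * D k : ℝ) : ℂ) := by
    rw [mul_right_comm]
    rw [show star (W k i) * W k i = ((Complex.normSq (W k i) : ℝ) : ℂ) by
      rw [Complex.star_def, Complex.normSq_eq_conj_mul_self]]
    push_cast
    ring
  rw [hk, Complex.ofReal_re]

private lemma aux_jensen_basis {X : Matrix n n ℂ} (hX : X.PosSemidef)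
    (U : Matrix n n ℂ) (hU1 : star U * U = 1) (hU2 : U * star U = 1) :
    ∑ i, Real.negMulLog (hX.1.eigenvalues i)
      ≤ ∑ i, Real.negMulLog ((star U * X * U) i i).re := by
  classical
  set V : Matrix n n ℂ := (hX.1.eigenvectorUnitary : Matrix n n ℂ) with hV
  have hV1 : star V * V = 1 := by
    rw [hV]
    exact (Matrix.mem_unitaryGroup_iff').mp hX.1.eigenvectorUnitary.2
  have hV2 : V * star V = 1 := by
    rw [hV]
    exact (Matrix.mem_unitaryGroup_iff).mp hX.1.eigenvectorUnitary.2
  set W : Matrix n n ℂ := star V * U with hW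
  have hW1 : star W * W = 1 := by
    rw [hW, Matrix.star_mul, star_star, Matrix.mul_assoc, ← Matrix.mul_assoc V, hV2,
      Matrix.one_mul, hU1]
  have hW2 : W * star W = 1 := by
    rw [hW, Matrix.star_mul, star_star, Matrix.mul_assoc, ← Matrix.mul_assoc U, hU2,
      Matrix.one_mul, hV1]
  have hXU : star U * X * U = star W * Matrix.diagonal (fun k => (hX.1.eigenvalues k : ℂ)) * W := by
    conv_lhs => rw [hX.1.spectral_theorem, Unitary.conjStarAlgAut_apply]
    rw [hW, Matrix.star_mul, star_star]
    have : Matrix.diagonal (RCLike.ofReal ∘ hX.1.eigenvalues)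
        = Matrix.diagonal (fun k => (hX.1.eigenvalues k : ℂ)) := rfl
    rw [this]
    noncomm_ring
  have hcol : ∀ i, ∑ k, Complex.normSq (W k i) = 1 := by
    intro i
    have := congrFun (congrFun hW1 i) i
    rw [Matrix.mul_apply] at this
    have h2 : ∀ k, (star W) i k * W k i = ((Complex.normSq (W k i) : ℝ) : ℂ) := by
      intro k
      rw [Matrix.star_apply, Complex.star_def, Complex.normSq_eq_conj_mul_self]
    calc ∑ k, Complex.normSq (W k i)
        = (∑ k, (star W) i k * W k i).re := by
          rw [Complex.re_sum]; apply Finset.sum_congr rfl; intro k _; rw [h2 k, Complex.ofReal_re]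
      _ = ((1 : Matrix n n ℂ) i i).re := by rw [this]
      _ = 1 := by simp
  have hrow : ∀ k, ∑ i, Complex.normSq (W k i) = 1 := by
    intro k
    have := congrFun (congrFun hW2 k) k
    rw [Matrix.mul_apply] at this
    have h2 : ∀ i, W k i * (star W) i k = ((Complex.normSq (W k i) : ℝ) : ℂ) := by
      intro i
      rw [Matrix.star_apply, Complex.star_def, mul_comm, Complex.normSq_eq_conj_mul_self]
    calc ∑ i, Complex.normSq (W k i)
        = (∑ i, W k i * (star W) i k).re := by
          rw [Complex.re_sum]; apply Finset.sum_congr rfl; intro i _; rw [h2 i, Complex.ofReal_re]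
      _ = ((1 : Matrix n n ℂ) k k).re := by rw [this]
      _ = 1 := by simp
  have hentry : ∀ i, ((star U * X * U) i i).re
      = ∑ k, Complex.normSq (W k i) * hX.1.eigenvalues k := by
    intro i
    rw [hXU]
    exact aux_unitary_conj_diag_re _ i
  calc ∑ k, Real.negMulLog (hX.1.eigenvalues k)
      = ∑ k, (∑ i, Complex.normSq (W k i)) * Real.negMulLog (hX.1.eigenvalues k) := by
        apply Finset.sum_congr rfl; intro k _; rw [hrow k, one_mul]
    _ = ∑ i, ∑ k, Complex.normSq (W k i) * Real.negMulLog (hX.1.eigenvalues k) := by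
        simp only [Finset.sum_mul]
        rw [Finset.sum_comm]
    _ ≤ ∑ i, Real.negMulLog ((star U * X * U) i i).re := by
        apply Finset.sum_le_sum
        intro i _
        rw [hentry i]
        have := Real.concaveOn_negMulLog.le_map_sum
          (t := Finset.univ) (w := fun k => Complex.normSq (W k i))
          (p := fun k => hX.1.eigenvalues k)
          (fun k _ => Complex.normSq_nonneg _) (hcol i)
          (fun k _ => Set.mem_Ici.mpr (hX.eigenvalues_nonneg k))
        simpa [smul_eq_mul] using this

private lemma aux_concavity {ι : Type*} [Fintype ι] (p : ι → ℝ) (τ : ι → Matrix n n ℂ)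
    (hp0 : ∀ i, 0 ≤ p i) (hp1 : ∑ i, p i = 1) (hτ : ∀ i, (τ i).PosSemidef) :
    ∑ i, p i * vnEntropy (τ i) ≤ vnEntropy (∑ i, p i • τ i) := by
  classical
  set Z : Matrix n n ℂ := ∑ i, p i • τ i with hZdef
  have hZ : Z.PosSemidef :=
    aux_psd_sum _ _ fun i _ => aux_psd_smul (hτ i) (hp0 i)
  set U : Matrix n n ℂ := (hZ.1.eigenvectorUnitary : Matrix n n ℂ) with hUdef
  have hU1 : star U * U = 1 := by
    rw [hUdef]
    exact (Matrix.mem_unitaryGroup_iff').mp hZ.1.eigenvectorUnitary.2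
  have hU2 : U * star U = 1 := by
    rw [hUdef]
    exact (Matrix.mem_unitaryGroup_iff).mp hZ.1.eigenvectorUnitary.2
  have hdiag : star U * Z * U = Matrix.diagonal (RCLike.ofReal ∘ hZ.1.eigenvalues) :=
    by
      conv_lhs => rw [hZ.1.spectral_theorem, Unitary.conjStarAlgAut_apply]
      rw [← hUdef]
      simp only [← Matrix.mul_assoc, hU1, Matrix.one_mul]
      rw [Matrix.mul_assoc, hU1, Matrix.mul_one]
  have heig : ∀ j, hZ.1.eigenvalues j = ((star U * Z * U) j j).re := by
    intro j
    rw [hdiag]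
    simp [Matrix.diagonal_apply_eq]
  have hlin : ∀ j, ((star U * Z * U) j j).re = ∑ i, p i * ((star U * τ i * U) j j).re := by
    intro j
    have : star U * Z * U = ∑ i, p i • (star U * τ i * U) := by
      rw [hZdef, Finset.mul_sum, Finset.sum_mul]
      apply Finset.sum_congr rfl
      intro i _
      rw [Matrix.mul_smul, Matrix.smul_mul]
    rw [this, Matrix.sum_apply, Complex.re_sum]
    apply Finset.sum_congr rfl
    intro i _
    rw [Matrix.smul_apply, Complex.smul_re, smul_eq_mul]
  have hx0 : ∀ i j, 0 ≤ ((star U * τ i * U) j j).re := by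
    intro i j
    have hpsd : (star U * τ i * U).PosSemidef := by
      rw [Matrix.star_eq_conjTranspose]
      exact (hτ i).conjTranspose_mul_mul_same U
    exact (Complex.le_def.mp (aux_diag_nonneg hpsd j)).1
  have step1 : vnEntropy Z = ∑ j, Real.negMulLog ((star U * Z * U) j j).re := by
    rw [aux_vnEntropy_eq hZ.1]
    apply Finset.sum_congr rfl
    intro j _
    rw [heig j]
  have step2 : ∀ j, ∑ i, p i * Real.negMulLog ((star U * τ i * U) j j).re
      ≤ Real.negMulLog ((star U * Z * U) j j).re := by
    intro j
    rw [hlin j]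
    have := Real.concaveOn_negMulLog.le_map_sum
      (t := Finset.univ) (w := p) (p := fun i => ((star U * τ i * U) j j).re)
      (fun i _ => hp0 i) hp1 (fun i _ => Set.mem_Ici.mpr (hx0 i j))
    simpa [smul_eq_mul] using this
  calc ∑ i, p i * vnEntropy (τ i)
      ≤ ∑ i, p i * ∑ j, Real.negMulLog ((star U * τ i * U) j j).re := by
        apply Finset.sum_le_sum
        intro i _
        apply mul_le_mul_of_nonneg_left _ (hp0 i)
        rw [aux_vnEntropy_eq (hτ i).1]
        exact aux_jensen_basis (hτ i) U hU1 hU2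
    _ = ∑ j, ∑ i, p i * Real.negMulLog ((star U * τ i * U) j j).re := by
        simp only [Finset.mul_sum]
        rw [Finset.sum_comm]
    _ ≤ ∑ j, Real.negMulLog ((star U * Z * U) j j).re := Finset.sum_le_sum fun j _ => step2 j
    _ = vnEntropy Z := step1.symm

end CDgeEDAux4
section CDgeEDAux5

variable {A B : Type*} [Fintype A] [DecidableEq A] [Fintype B] [DecidableEq B]

private lemma aux_entropy_ptrace_eq (ψ : A × B → ℂ) :
    vnEntropy (ptraceB (vecState ψ)) = vnEntropy (ptraceA (vecState ψ)) := by
  set M : Matrix A B ℂ := Matrix.of fun a b => ψ (a, b) with hM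
  have h1 : ptraceB (vecState ψ) = M * Mᴴ := by
    ext a a'
    simp [ptraceB, vecState, Matrix.mul_apply, Matrix.conjTranspose_apply, hM]
  have h2 : ptraceA (vecState ψ) = Mᵀ * (Mᵀ)ᴴ := by
    ext b b'
    simp [ptraceA, vecState, Matrix.mul_apply, Matrix.conjTranspose_apply, hM]
  have h3 : (Mᵀ)ᴴ * Mᵀ = (M * Mᴴ)ᵀ := by
    ext a a'
    simp only [Matrix.mul_apply, Matrix.conjTranspose_apply, Matrix.transpose_apply]
    apply Finset.sum_congr rfl
    intro b _
    ring
  rw [h1, h2, aux_vnEntropy_mul_conjT (Mᵀ), h3,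
    aux_vnEntropy_transpose (Matrix.isHermitian_mul_conjTranspose_self M),
    aux_vnEntropy_mul_conjT M]

private lemma aux_vecState_real_smul {n : Type*} [Fintype n] (r : ℝ) (ψ : n → ℂ) :
    vecState (((r : ℝ) : ℂ) • ψ) = (r ^ 2 : ℝ) • vecState ψ := by
  ext i j
  simp only [vecState, Matrix.of_apply, Pi.smul_apply, Matrix.smul_apply, smul_eq_mul,
    star_mul', Complex.star_def, Complex.conj_ofReal, Complex.real_smul]
  push_cast
  ring

private def auxProj (b : B) : Matrix B B ℂ :=
  Matrix.diagonal (Pi.single b 1)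

private lemma aux_auxProj_psd (b : B) : (auxProj b).PosSemidef := by
  apply Matrix.PosSemidef.diagonal
  intro x
  rcases eq_or_ne x b with h | h
  · simp [h, Pi.single_apply]
  · simp [Pi.single_apply, h]

private lemma aux_auxProj_sum : ∑ b : B, auxProj b = (1 : Matrix B B ℂ) := by
  have : ∑ b : B, auxProj b = Matrix.diagonal (∑ b : B, Pi.single b (1 : ℂ)) := by
    unfold auxProj
    ext i j
    simp only [Matrix.sum_apply, Matrix.diagonal_apply]
    by_cases h : i = j
    · simp [h]
    · simp [h]
  rw [this]
  rw [Finset.univ_sum_single (fun _ : B => (1 : ℂ))]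
  exact Matrix.diagonal_one

private lemma aux_proj_ptraceB (τ : Matrix (A × B) (A × B) ℂ) (b : B) :
    ptraceB (((1 : Matrix A A ℂ) ⊗ₖ auxProj b) * τ)
      = Matrix.of fun a a' => τ (a, b) (a', b) := by
  ext a a'
  show ∑ c, (((1 : Matrix A A ℂ) ⊗ₖ auxProj b) * τ) (a, c) (a', c) = τ (a, b) (a', b)
  have hc : ∀ c, (((1 : Matrix A A ℂ) ⊗ₖ auxProj b) * τ) (a, c) (a', c)
      = (if c = b then (1 : ℂ) else 0) * τ (a, c) (a', c) := by
    intro c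
    rw [aux_kron_mul_apply]
    show (∑ e, Matrix.diagonal (Pi.single b (1 : ℂ)) c e * τ (a, e) (a', c)) = _
    rw [Finset.sum_eq_single c]
    · rw [Matrix.diagonal_apply_eq]
      rw [Pi.single_apply]
    · intro e _ he
      rw [Matrix.diagonal_apply_ne _ (Ne.symm he), zero_mul]
    · intro hmem
      exact absurd (Finset.mem_univ c) hmem
  simp only [hc, ite_mul, one_mul, zero_mul]
  rw [Finset.sum_ite_eq' Finset.univ b (fun c => τ (a, c) (a', c))]
  simp

end CDgeEDAux5
section CDgeEDAux6

variable {A B : Type*} [Fintype A] [DecidableEq A] [Fintype B] [DecidableEq B]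

private lemma aux_branch (τ : Matrix (A × B) (A × B) ℂ) (hτ : IsDensity τ) :
    ∑ b : B, povmProb τ (auxProj b) * vnEntropy (condA τ (auxProj b)) ≤ vnEntropy τ := by
  classical
  obtain ⟨S, hSS, hSh⟩ := aux_psd_sqrt hτ.1
  set ψ : (A × B) × (A × B) → ℂ := fun p => S p.1 p.2 with hψdef
  have hτψ : τ = ptraceB (vecState ψ) := by
    ext x x'
    show τ x x' = ∑ y, (vecState ψ) (x, y) (x', y)
    have : ∀ y, (vecState ψ) (x, y) (x', y) = S x y * Sᴴ y x' := by
      intro y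
      simp [vecState, hψdef, Matrix.conjTranspose_apply]
    simp only [this]
    rw [← Matrix.mul_apply, hSh, hSS]
  set φ : B → (A × (A × B)) → ℂ := fun b p => S (p.1, b) p.2 with hφdef
  set q : B → ℝ := fun b => povmProb τ (auxProj b) with hqdef
  have hPB : ∀ b, ptraceB (((1 : Matrix A A ℂ) ⊗ₖ auxProj b) * τ)
      = ptraceB (vecState (φ b)) := by
    intro b
    rw [aux_proj_ptraceB]
    ext a a'
    show τ (a, b) (a', b) = ∑ e, (vecState (φ b)) (a, e) (a', e)
    have : ∀ e, (vecState (φ b)) (a, e) (a', e) = S (a, b) e * Sᴴ e (a', b) := by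
      intro e
      simp [vecState, hφdef, Matrix.conjTranspose_apply]
    simp only [this]
    rw [← Matrix.mul_apply, hSh, hSS]
  have hq_eq : ∀ b, q b = (ptraceB (vecState (φ b))).trace.re := by
    intro b
    rw [hqdef]
    show (((1 : Matrix A A ℂ) ⊗ₖ auxProj b) * τ).trace.re = _
    rw [← aux_trace_ptraceB, hPB b]
  have hq0 : ∀ b, 0 ≤ q b := by
    intro b
    rw [hq_eq b]
    exact aux_trace_re_nonneg (aux_ptraceB_psd (aux_vecState_posSemidef (φ b)))
  have hq1 : ∑ b, q b = 1 := by
    have hsum : ∑ b, (((1 : Matrix A A ℂ) ⊗ₖ auxProj b) * τ) = τ := by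
      rw [← Finset.sum_mul, ← aux_kron_sum, aux_auxProj_sum, Matrix.one_kronecker_one,
        Matrix.one_mul]
    have hqsum : ∑ b, q b = (∑ b, (((1 : Matrix A A ℂ) ⊗ₖ auxProj b) * τ)).trace.re := by
      rw [Matrix.trace_sum, Complex.re_sum]
      rfl
    rw [hqsum, hsum, hτ.2]
    simp
  set φ' : B → (A × (A × B)) → ℂ := fun b => (((Real.sqrt (q b)⁻¹ : ℝ) : ℂ)) • φ b with hφ'def
  have hsq : ∀ b, (Real.sqrt (q b)⁻¹) ^ 2 = (q b)⁻¹ :=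
    fun b => Real.sq_sqrt (inv_nonneg.mpr (hq0 b))
  have hcond : ∀ b, condA τ (auxProj b) = ptraceB (vecState (φ' b)) := by
    intro b
    show (povmProb τ (auxProj b))⁻¹ • ptraceB (((1 : Matrix A A ℂ) ⊗ₖ auxProj b) * τ) = _
    rw [hPB b, hφ'def]
    rw [aux_vecState_real_smul, aux_ptraceB_smul, hsq]
  have heta : ∀ b, q b • ptraceA (vecState (φ' b)) = ptraceA (vecState (φ b)) := by
    intro b
    rw [hφ'def]
    rw [aux_vecState_real_smul, aux_ptraceA_smul, hsq, smul_smul]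
    rcases eq_or_ne (q b) 0 with h | h
    · have hz : ptraceA (vecState (φ b)) = 0 := by
        apply aux_psd_trace_zero (aux_ptraceA_psd (aux_vecState_posSemidef (φ b)))
        rw [aux_trace_ptraceA, ← aux_trace_ptraceB]
        rw [← hq_eq b, h]
      rw [hz]
      simp
    · rw [mul_inv_cancel₀ h, one_smul]
  have hF3 : ∑ b, ptraceA (vecState (φ b)) = ptraceA (vecState ψ) := by
    ext e e'
    rw [Matrix.sum_apply]
    have hterm : ∀ b, ptraceA (vecState (φ b)) e e'
        = ∑ a, (vecState ψ) ((a, b), e) ((a, b), e') := fun b => rfl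
    simp only [hterm]
    show ∑ b, ∑ a, (vecState ψ) ((a, b), e) ((a, b), e')
        = ∑ x : A × B, (vecState ψ) (x, e) (x, e')
    rw [Fintype.sum_prod_type]
    rw [Finset.sum_comm]
  calc ∑ b, povmProb τ (auxProj b) * vnEntropy (condA τ (auxProj b))
      = ∑ b, q b * vnEntropy (ptraceA (vecState (φ' b))) := by
        apply Finset.sum_congr rfl
        intro b _
        rw [show povmProb τ (auxProj b) = q b from rfl, hcond b, aux_entropy_ptrace_eq]
    _ ≤ vnEntropy (∑ b, q b • ptraceA (vecState (φ' b))) :=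
        aux_concavity q _ hq0 hq1
          (fun b => aux_ptraceA_psd (aux_vecState_posSemidef (φ' b)))
    _ = vnEntropy (ptraceA (vecState ψ)) := by
        rw [show ∑ b, q b • ptraceA (vecState (φ' b)) = ∑ b, ptraceA (vecState (φ b)) from
          Finset.sum_congr rfl fun b _ => heta b, hF3]
    _ = vnEntropy τ := by
        rw [← aux_entropy_ptrace_eq ψ, ← hτψ]

end CDgeEDAux6
section CDgeEDAux7

variable {A B : Type*} [Fintype A] [DecidableEq A] [Fintype B] [DecidableEq B]

private lemma aux_ptraceB_kron_psd {σ : Matrix (A × B) (A × B) ℂ} (hσ : σ.PosSemidef)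
    {M : Matrix B B ℂ} (hM : M.PosSemidef) :
    (ptraceB (((1 : Matrix A A ℂ) ⊗ₖ M) * σ)).PosSemidef := by
  obtain ⟨C, hC⟩ := aux_psd_eq_conjT_mul hM
  rw [hC, ← aux_ptraceB_cyc C Cᴴ σ]
  rw [show ((1 : Matrix A A ℂ) ⊗ₖ C) * σ * ((1 : Matrix A A ℂ) ⊗ₖ Cᴴ)
      = ((1 : Matrix A A ℂ) ⊗ₖ C) * σ * ((1 : Matrix A A ℂ) ⊗ₖ C)ᴴ by rw [aux_kron_conjT]]
  exact aux_ptraceB_psd (hσ.mul_mul_conjTranspose_same _)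

private lemma aux_povmProb_nonneg {σ : Matrix (A × B) (A × B) ℂ} (hσ : σ.PosSemidef)
    {M : Matrix B B ℂ} (hM : M.PosSemidef) : 0 ≤ povmProb σ M := by
  show 0 ≤ (((1 : Matrix A A ℂ) ⊗ₖ M) * σ).trace.re
  rw [← aux_trace_ptraceB]
  exact aux_trace_re_nonneg (aux_ptraceB_kron_psd hσ hM)

private lemma aux_condA_entropy_nonneg {σ : Matrix (A × B) (A × B) ℂ} (hσ : σ.PosSemidef)
    {M : Matrix B B ℂ} (hM : M.PosSemidef) : 0 ≤ vnEntropy (condA σ M) := by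
  have h : condA σ M
      = ((ptraceB (((1 : Matrix A A ℂ) ⊗ₖ M) * σ)).trace.re)⁻¹
        • ptraceB (((1 : Matrix A A ℂ) ⊗ₖ M) * σ) := by
    show (povmProb σ M)⁻¹ • _ = _
    rw [show povmProb σ M = (ptraceB (((1 : Matrix A A ℂ) ⊗ₖ M) * σ)).trace.re by
      show (((1 : Matrix A A ℂ) ⊗ₖ M) * σ).trace.re = _
      rw [aux_trace_ptraceB]]
  rw [h]
  exact aux_vnEntropy_normalize_nonneg (aux_ptraceB_kron_psd hσ hM)

private lemma aux_ED1_le_Iacc (σ : Matrix (A × B) (A × B) ℂ) (hσ : IsDensity σ) :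
    ED1 σ ≤ Iacc σ := by
  classical
  have hbdd : BddAbove {v | ∃ (k : ℕ) (M : Fin k → Matrix B B ℂ), IsPOVM M ∧
      v = vnEntropy (ptraceB σ) - ∑ x, povmProb σ (M x) * vnEntropy (condA σ (M x))} := by
    refine ⟨vnEntropy (ptraceB σ), ?_⟩
    rintro v ⟨k, M, hM, rfl⟩
    have h0 : 0 ≤ ∑ x, povmProb σ (M x) * vnEntropy (condA σ (M x)) :=
      Finset.sum_nonneg fun x _ => mul_nonneg (aux_povmProb_nonneg hσ.1 (hM.1 x))
        (aux_condA_entropy_nonneg hσ.1 (hM.1 x))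
    linarith
  have hmem0 : (0 : ℝ) ∈ {v | ∃ (k : ℕ) (M : Fin k → Matrix B B ℂ), IsPOVM M ∧
      v = vnEntropy (ptraceB σ) - ∑ x, povmProb σ (M x) * vnEntropy (condA σ (M x))} := by
    refine ⟨1, fun _ => 1, ⟨fun _ => Matrix.PosSemidef.one, by simp⟩, ?_⟩
    have h1 : povmProb σ (1 : Matrix B B ℂ) = 1 := by
      show (((1 : Matrix A A ℂ) ⊗ₖ (1 : Matrix B B ℂ)) * σ).trace.re = 1
      rw [Matrix.one_kronecker_one, Matrix.one_mul, hσ.2]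
      simp
    have h2 : condA σ (1 : Matrix B B ℂ) = ptraceB σ := by
      show (povmProb σ (1 : Matrix B B ℂ))⁻¹
          • ptraceB (((1 : Matrix A A ℂ) ⊗ₖ (1 : Matrix B B ℂ)) * σ) = _
      rw [h1, Matrix.one_kronecker_one, Matrix.one_mul]
      simp
    rw [Fin.sum_univ_one, h1, h2]
    ring
  apply Real.sSup_le _ (le_csSup hbdd hmem0)
  rintro v ⟨k, m, K, hK, rfl⟩
  -- notation
  set Y : Fin k → Matrix (A × B) (A × B) ℂ := fun i => instrApply (K i) σ with hYdef
  set p : Fin k → ℝ := fun i => (Y i).trace.re with hpdef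
  set N : Fin k → B → Matrix B B ℂ :=
    fun i b => ∑ j, (K i j)ᴴ * (auxProj b * K i j) with hNdef
  have hYpsd : ∀ i, (Y i).PosSemidef :=
    fun i => aux_psd_sum _ _ fun j _ => hσ.1.mul_mul_conjTranspose_same _
  have hp0 : ∀ i, 0 ≤ p i := fun i => aux_trace_re_nonneg (hYpsd i)
  -- T1
  have hT1 : ∀ i, ptraceB (Y i)
      = ∑ j, ptraceB (((1 : Matrix A A ℂ) ⊗ₖ ((K i j)ᴴ * K i j)) * σ) := by
    intro i
    rw [hYdef]
    show ptraceB (∑ j, ((1 : Matrix A A ℂ) ⊗ₖ K i j) * σ * ((1 : Matrix A A ℂ) ⊗ₖ K i j)ᴴ) = _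
    rw [aux_ptraceB_sum]
    apply Finset.sum_congr rfl
    intro j _
    rw [aux_kron_conjT, aux_ptraceB_cyc]
  -- T2
  have hT2 : ∀ i b, ptraceB (((1 : Matrix A A ℂ) ⊗ₖ N i b) * σ)
      = ptraceB (((1 : Matrix A A ℂ) ⊗ₖ auxProj b) * Y i) := by
    intro i b
    have hL : ptraceB (((1 : Matrix A A ℂ) ⊗ₖ N i b) * σ)
        = ∑ j, ptraceB (((1 : Matrix A A ℂ) ⊗ₖ ((K i j)ᴴ * (auxProj b * K i j))) * σ) := by
      rw [hNdef]
      show ptraceB (((1 : Matrix A A ℂ) ⊗ₖ (∑ j, (K i j)ᴴ * (auxProj b * K i j))) * σ) = _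
      rw [aux_kron_sum, Finset.sum_mul, aux_ptraceB_sum]
    have hR : ptraceB (((1 : Matrix A A ℂ) ⊗ₖ auxProj b) * Y i)
        = ∑ j, ptraceB (((1 : Matrix A A ℂ) ⊗ₖ ((K i j)ᴴ * (auxProj b * K i j))) * σ) := by
      rw [hYdef]
      show ptraceB (((1 : Matrix A A ℂ) ⊗ₖ auxProj b)
        * ∑ j, ((1 : Matrix A A ℂ) ⊗ₖ K i j) * σ * ((1 : Matrix A A ℂ) ⊗ₖ K i j)ᴴ) = _
      rw [Finset.mul_sum, aux_ptraceB_sum]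
      apply Finset.sum_congr rfl
      intro j _
      rw [aux_kron_conjT]
      rw [show ((1 : Matrix A A ℂ) ⊗ₖ auxProj b)
            * (((1 : Matrix A A ℂ) ⊗ₖ K i j) * σ * ((1 : Matrix A A ℂ) ⊗ₖ (K i j)ᴴ))
          = ((1 : Matrix A A ℂ) ⊗ₖ (auxProj b * K i j)) * σ
            * ((1 : Matrix A A ℂ) ⊗ₖ (K i j)ᴴ) by
        rw [← Matrix.mul_assoc, ← Matrix.mul_assoc, ← Matrix.mul_kronecker_mul,
          Matrix.one_mul]]
      rw [aux_ptraceB_cyc]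
    rw [hL, hR]
  -- T3
  have hT3 : ∀ i b, (((1 : Matrix A A ℂ) ⊗ₖ N i b) * σ).trace
      = (((1 : Matrix A A ℂ) ⊗ₖ auxProj b) * Y i).trace := by
    intro i b
    rw [← aux_trace_ptraceB, ← aux_trace_ptraceB (((1 : Matrix A A ℂ) ⊗ₖ auxProj b) * Y i),
      hT2 i b]
  -- T4
  have hT4 : ∑ i, ptraceB (Y i) = ptraceB σ := by
    have : ∑ i, ptraceB (Y i)
        = ptraceB (((1 : Matrix A A ℂ) ⊗ₖ (∑ i, ∑ j, (K i j)ᴴ * K i j)) * σ) := by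
      rw [aux_kron_sum, Finset.sum_mul, aux_ptraceB_sum]
      apply Finset.sum_congr rfl
      intro i _
      rw [hT1 i, aux_kron_sum, Finset.sum_mul, aux_ptraceB_sum]
    rw [this, hK, Matrix.one_kronecker_one, Matrix.one_mul]
  have hp1 : ∑ i, p i = 1 := by
    have h1 : ∑ i, (Y i).trace = (1 : ℂ) := by
      calc ∑ i, (Y i).trace = ∑ i, (ptraceB (Y i)).trace := by
            apply Finset.sum_congr rfl
            intro i _
            rw [aux_trace_ptraceB]
        _ = (∑ i, ptraceB (Y i)).trace := (Matrix.trace_sum _ _).symm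
        _ = (ptraceB σ).trace := by rw [hT4]
        _ = σ.trace := aux_trace_ptraceB σ
        _ = 1 := hσ.2
    have := congrArg Complex.re h1
    rw [Complex.re_sum] at this
    simpa using this
  -- Step A : concavity
  have hA : ∑ i, p i * vnEntropy ((p i)⁻¹ • ptraceB (Y i)) ≤ vnEntropy (ptraceB σ) := by
    have hconv := aux_concavity p (fun i => (p i)⁻¹ • ptraceB (Y i)) hp0 hp1
      (fun i => aux_psd_smul (aux_ptraceB_psd (hYpsd i)) (inv_nonneg.mpr (hp0 i)))
    have heq : ∑ i, p i • ((p i)⁻¹ • ptraceB (Y i)) = ptraceB σ := by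
      rw [← hT4]
      apply Finset.sum_congr rfl
      intro i _
      rcases eq_or_ne (p i) 0 with h | h
      · have hz : Y i = 0 := aux_psd_trace_zero (hYpsd i) h
        rw [hz, aux_ptraceB_zero, smul_zero, smul_zero]
      · rw [smul_smul, mul_inv_cancel₀ h, one_smul]
    rw [heq] at hconv
    exact hconv
  -- Step B : per-branch measurement bound
  have hB : ∀ i, ∑ b, povmProb σ (N i b) * vnEntropy (condA σ (N i b))
      ≤ p i * vnEntropy ((p i)⁻¹ • Y i) := by
    intro i
    rcases eq_or_ne (p i) 0 with h | h
    · have hz : Y i = 0 := aux_psd_trace_zero (hYpsd i) h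
      have hzero : ∀ b, povmProb σ (N i b) = 0 := by
        intro b
        show (((1 : Matrix A A ℂ) ⊗ₖ N i b) * σ).trace.re = 0
        rw [hT3 i b, hz, Matrix.mul_zero, Matrix.trace_zero]
        simp
      rw [h]
      simp only [hzero, zero_mul, Finset.sum_const_zero]
      exact le_rfl
    · -- normalized branch state
      set τ : Matrix (A × B) (A × B) ℂ := (p i)⁻¹ • Y i with hτdef
      have hτpsd : τ.PosSemidef := aux_psd_smul (hYpsd i) (inv_nonneg.mpr (hp0 i))
      have hτtr : τ.trace = 1 := by
        rw [hτdef, Matrix.trace_smul]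
        rw [show (Y i).trace = ((p i : ℝ) : ℂ) from (aux_trace_re_eq (hYpsd i).1).symm]
        rw [Complex.real_smul]
        rw [show ((p i)⁻¹ : ℝ) * ((p i : ℝ) : ℂ) = (((p i)⁻¹ * p i : ℝ) : ℂ) by push_cast; ring]
        rw [inv_mul_cancel₀ h]
        simp
      have hbr := aux_branch τ ⟨hτpsd, hτtr⟩
      set r : B → ℝ := fun b => (((1 : Matrix A A ℂ) ⊗ₖ auxProj b) * Y i).trace.re with hrdef
      have hprob : ∀ b, povmProb τ (auxProj b) = (p i)⁻¹ * r b := by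
        intro b
        show (((1 : Matrix A A ℂ) ⊗ₖ auxProj b) * τ).trace.re = _
        rw [hτdef, Matrix.mul_smul, Matrix.trace_smul, Complex.smul_re]
        rfl
      have hprobN : ∀ b, povmProb σ (N i b) = r b := by
        intro b
        show (((1 : Matrix A A ℂ) ⊗ₖ N i b) * σ).trace.re = _
        rw [hT3 i b]
      have hcondeq : ∀ b, condA σ (N i b) = condA τ (auxProj b) := by
        intro b
        show (povmProb σ (N i b))⁻¹ • ptraceB (((1 : Matrix A A ℂ) ⊗ₖ N i b) * σ)
          = (povmProb τ (auxProj b))⁻¹ • ptraceB (((1 : Matrix A A ℂ) ⊗ₖ auxProj b) * τ)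
        rw [hprobN b, hT2 i b, hprob b]
        rw [hτdef, Matrix.mul_smul, aux_ptraceB_smul, smul_smul]
        congr 1
        rw [_root_.mul_inv_rev, inv_inv, mul_assoc, mul_inv_cancel₀ h, mul_one]
      calc ∑ b, povmProb σ (N i b) * vnEntropy (condA σ (N i b))
          = ∑ b, (p i * povmProb τ (auxProj b)) * vnEntropy (condA τ (auxProj b)) := by
            apply Finset.sum_congr rfl
            intro b _
            rw [hcondeq b, hprobN b, hprob b, ← mul_assoc, mul_inv_cancel₀ h, one_mul]
        _ = p i * ∑ b, povmProb τ (auxProj b) * vnEntropy (condA τ (auxProj b)) := by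
            rw [Finset.mul_sum]
            apply Finset.sum_congr rfl
            intro b _
            ring
        _ ≤ p i * vnEntropy τ := mul_le_mul_of_nonneg_left hbr (hp0 i)
        _ = p i * vnEntropy ((p i)⁻¹ • Y i) := rfl
  -- assemble the POVM
  have hNpsd : ∀ i b, (N i b).PosSemidef := by
    intro i b
    show (∑ j, (K i j)ᴴ * (auxProj b * K i j)).PosSemidef
    apply aux_psd_sum
    intro j _
    rw [← Matrix.mul_assoc]
    exact (aux_auxProj_psd b).conjTranspose_mul_mul_same _
  set kk := Fintype.card (Fin k × B) with hkk
  set e : Fin k × B ≃ Fin kk := Fintype.equivFin (Fin k × B) with hedef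
  set M' : Fin kk → Matrix B B ℂ := fun x => N (e.symm x).1 (e.symm x).2 with hM'def
  have hPOVM : IsPOVM M' := by
    constructor
    · intro x
      exact hNpsd _ _
    · rw [show ∑ x, M' x = ∑ pr : Fin k × B, N pr.1 pr.2 from
        Equiv.sum_comp e.symm (fun pr : Fin k × B => N pr.1 pr.2)]
      rw [Fintype.sum_prod_type]
      have hNsum : ∀ i, ∑ b, N i b = ∑ j, (K i j)ᴴ * K i j := by
        intro i
        show ∑ b, ∑ j, (K i j)ᴴ * (auxProj b * K i j) = _
        rw [Finset.sum_comm]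
        apply Finset.sum_congr rfl
        intro j _
        rw [← Finset.mul_sum, ← Finset.sum_mul, aux_auxProj_sum, Matrix.one_mul]
      rw [show (∑ i, ∑ b, N i b) = ∑ i, ∑ j, (K i j)ᴴ * K i j from
        Finset.sum_congr rfl fun i _ => hNsum i]
      exact hK
  have hsum_eq : ∑ x, povmProb σ (M' x) * vnEntropy (condA σ (M' x))
      = ∑ i, ∑ b, povmProb σ (N i b) * vnEntropy (condA σ (N i b)) := by
    rw [show (∑ x, povmProb σ (M' x) * vnEntropy (condA σ (M' x)))
        = ∑ pr : Fin k × B, povmProb σ (N pr.1 pr.2) * vnEntropy (condA σ (N pr.1 pr.2)) from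
      Equiv.sum_comp e.symm
        (fun pr : Fin k × B => povmProb σ (N pr.1 pr.2) * vnEntropy (condA σ (N pr.1 pr.2)))]
    rw [Fintype.sum_prod_type]
  have hvw : ∑ i, p i * (vnEntropy ((p i)⁻¹ • ptraceB (Y i)) - vnEntropy ((p i)⁻¹ • Y i))
      ≤ vnEntropy (ptraceB σ) - ∑ x, povmProb σ (M' x) * vnEntropy (condA σ (M' x)) := by
    rw [hsum_eq]
    have hBsum : ∑ i, ∑ b, povmProb σ (N i b) * vnEntropy (condA σ (N i b))
        ≤ ∑ i, p i * vnEntropy ((p i)⁻¹ • Y i) := Finset.sum_le_sum fun i _ => hB i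
    have hexp : ∑ i, p i * (vnEntropy ((p i)⁻¹ • ptraceB (Y i)) - vnEntropy ((p i)⁻¹ • Y i))
        = ∑ i, p i * vnEntropy ((p i)⁻¹ • ptraceB (Y i))
          - ∑ i, p i * vnEntropy ((p i)⁻¹ • Y i) := by
      rw [← Finset.sum_sub_distrib]
      apply Finset.sum_congr rfl
      intro i _
      ring
    rw [hexp]
    linarith [hA, hBsum]
  exact le_trans hvw (le_csSup hbdd ⟨kk, M', hPOVM, rfl⟩)

end CDgeEDAux7
section CDgeEDAux8

private lemma aux_tpow_density {A B : Type*} [Fintype A] [DecidableEq A]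
    [Fintype B] [DecidableEq B]
    {ρ : Matrix (A × B) (A × B) ℂ} (hρ : IsDensity ρ) (n : ℕ) : IsDensity (tpow ρ n) := by
  classical
  obtain ⟨C, hC⟩ := aux_psd_eq_conjT_mul hρ.1
  constructor
  · have key : tpow ρ n
        = (Matrix.of fun (z : Fin n → A × B) (x : (Fin n → A) × (Fin n → B)) =>
            ∏ i, C (z i) (x.1 i, x.2 i))ᴴ
          * (Matrix.of fun (z : Fin n → A × B) (x : (Fin n → A) × (Fin n → B)) =>
            ∏ i, C (z i) (x.1 i, x.2 i)) := by
      ext x y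
      show ∏ i, ρ (x.1 i, x.2 i) (y.1 i, y.2 i) = _
      rw [Matrix.mul_apply]
      calc ∏ i, ρ (x.1 i, x.2 i) (y.1 i, y.2 i)
          = ∏ i, ∑ z : A × B,
              (starRingEnd ℂ) (C z (x.1 i, x.2 i)) * C z (y.1 i, y.2 i) := by
            apply Finset.prod_congr rfl
            intro i _
            rw [hC, Matrix.mul_apply]
            apply Finset.sum_congr rfl
            intro z _
            rw [Matrix.conjTranspose_apply]
            rfl
        _ = ∑ g : Fin n → A × B, ∏ i,
              ((starRingEnd ℂ) (C (g i) (x.1 i, x.2 i)) * C (g i) (y.1 i, y.2 i)) :=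
            Fintype.prod_sum _
        _ = ∑ g : Fin n → A × B,
              (starRingEnd ℂ) (∏ i, C (g i) (x.1 i, x.2 i)) * ∏ i, C (g i) (y.1 i, y.2 i) := by
            apply Finset.sum_congr rfl
            intro g _
            rw [Finset.prod_mul_distrib, map_prod]
        _ = _ := by
            apply Finset.sum_congr rfl
            intro g _
            rw [Matrix.conjTranspose_apply]
            rfl
    rw [key]
    exact Matrix.posSemidef_conjTranspose_mul_self _
  · calc (tpow ρ n).trace
        = ∑ x : (Fin n → A) × (Fin n → B), ∏ i, ρ (x.1 i, x.2 i) (x.1 i, x.2 i) := rfl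
      _ = ∑ g : Fin n → A × B, ∏ i, ρ (g i) (g i) := by
          refine (Fintype.sum_equiv (Equiv.arrowProdEquivProdArrow (Fin n) (fun _ => A) (fun _ => B)) _ _ ?_).symm
          intro g
          simp [Equiv.arrowProdEquivProdArrow]
      _ = ∏ _i : Fin n, ∑ c : A × B, ρ c c :=
          (Fintype.prod_sum (κ := fun _ : Fin n => A × B) (f := fun _ c => ρ c c)).symm
      _ = (ρ.trace) ^ n := by
          rw [Finset.prod_const, Finset.card_univ, Fintype.card_fin]
          rfl
      _ = 1 := by rw [hρ.2, one_pow]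

end CDgeEDAux8
/-- Proposition 1: the one-way distillable common randomness dominates
the one-way distillable entanglement, `C_D^←(ρ_AB) ≥ E_D^←(ρ_AB)` (the quantities being
the limits `C_D^← = lim (1/n) I^←(ρ^{⊗n})`, `E_D^← = lim (1/n) E_D^{←(1)}(ρ^{⊗n})`). -/
theorem CD_ge_ED
    {A B : Type*} [Fintype A] [DecidableEq A] [Fintype B] [DecidableEq B]
    (ρ : Matrix (A × B) (A × B) ℂ) (hρ : IsDensity ρ)
    (CD ED : ℝ)
    (hCD : Tendsto (fun n : ℕ => Iacc (tpow ρ n) / (n : ℝ)) atTop (nhds CD))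
    (hED : Tendsto (fun n : ℕ => ED1 (tpow ρ n) / (n : ℝ)) atTop (nhds ED)) :
    CD ≥ ED := by
  have key : ∀ n : ℕ, ED1 (tpow ρ n) / (n : ℝ) ≤ Iacc (tpow ρ n) / (n : ℝ) := by
    intro n
    rcases Nat.eq_zero_or_pos n with h | h
    · subst h
      simp
    · have hn : (0 : ℝ) < (n : ℝ) := by exact_mod_cast h
      exact (div_le_div_iff_of_pos_right hn).mpr (aux_ED1_le_Iacc _ (aux_tpow_density hρ n))
  exact le_of_tendsto_of_tendsto' hED hCD key

end QIT
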